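/- arXiv:2003.11713 — 4 statements merged into one kernel-verified Lean document; each statement's English description precedes it below -/
import Mathlib

section
/- Let f, g be real polynomials (viewed as smooth functions ℝ → ℝ) with g(r) > 0 for all r in a closed interval U, and suppose g·(g·f''' - f·g''') - 3·g''·(g·f' - f·g') = 0 on U. Define Δ_h(r) = g·(g·f'' - f·g'') - 2·g'·(g·f' - f·g'). Then Δ_h is constant on U, and if Δ_h(r0) > 0 for some r0 ∈ U then h = f/g is convex on U, while if Δ_h(r0) < 0 then h is concave on U. -/
open Polynomial Set

/-- The discriminant-type expression `Δ_h = g(g f'' - f g'') - 2 g'(g f' - f g')`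
evaluated at `r`, for polynomials `f, g`. -/
noncomputable def DeltaH (f g : Polynomial ℝ) (r : ℝ) : ℝ :=
  (g.eval r) * ((g.eval r) * ((derivative (derivative f)).eval r)
      - (f.eval r) * ((derivative (derivative g)).eval r))
    - 2 * ((derivative g).eval r) * ((g.eval r) * ((derivative f).eval r)
      - (f.eval r) * ((derivative g).eval r))

/-! With `W = g f' - g' f` (`Polynomial.wronskian g f`), one has `(f/g)' = W/g²` and
`(f/g)'' = (g W' - 2 g' W)/g³ = Δ_h/g³`, while the hypothesis says exactly that the
derivative `g W'' - g' W' - 2 g'' W` of `Δ_h` vanishes. So `Δ_h` is constant on the interval and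
its sign is that of `(f/g)''`. -/

namespace Polynomial

theorem eval_eq_of_derivative_eval_eq_zero {p : ℝ[X]} {s : Set ℝ} (hs : Convex ℝ s)
    (hp : ∀ x ∈ s, (derivative p).eval x = 0) {x y : ℝ} (hx : x ∈ s) (hy : y ∈ s) :
    p.eval x = p.eval y := by
  have h := hs.norm_image_sub_le_of_norm_deriv_le (f := fun x => p.eval x) (C := 0)
    (fun _ _ => p.differentiableAt) (fun z hz => by simp [Polynomial.deriv, hp z hz]) hy hx
  simpa [sub_eq_zero] using h

noncomputable def deltaH (f g : ℝ[X]) : ℝ[X] :=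
  g * derivative (wronskian g f) - 2 * derivative g * wronskian g f

theorem eval_deltaH (f g : ℝ[X]) (r : ℝ) : (deltaH f g).eval r = DeltaH f g r := by
  simp only [deltaH, wronskian, DeltaH, derivative_mul, derivative_sub, eval_sub, eval_mul,
    eval_add, eval_ofNat]
  ring

theorem derivative_deltaH (f g : ℝ[X]) :
    derivative (deltaH f g) =
      g * (g * derivative (derivative (derivative f))
          - f * derivative (derivative (derivative g)))
        - 3 * derivative (derivative g) * (g * derivative f - f * derivative g) := by
  simp only [deltaH, wronskian, derivative_mul, derivative_sub, derivative_add, derivative_ofNat]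
  ring

theorem hasDerivAt_eval_div_eval (f g : ℝ[X]) {x : ℝ} (hx : g.eval x ≠ 0) :
    HasDerivAt (fun r => f.eval r / g.eval r) ((wronskian g f).eval x / g.eval x ^ 2) x := by
  refine ((f.hasDerivAt x).div (g.hasDerivAt x) hx).congr_deriv ?_
  simp only [wronskian, eval_sub, eval_mul]
  ring

theorem hasDerivAt_eval_wronskian_div_sq (f g : ℝ[X]) {x : ℝ} (hx : g.eval x ≠ 0) :
    HasDerivAt (fun r => (wronskian g f).eval r / g.eval r ^ 2)
      (DeltaH f g x / g.eval x ^ 3) x := by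
  refine (((wronskian g f).hasDerivAt x).div ((g.hasDerivAt x).pow 2)
    (pow_ne_zero 2 hx)).congr_deriv ?_
  rw [← eval_deltaH, deltaH]
  field_simp
  simp only [Pi.pow_apply, eval_sub, eval_mul, eval_ofNat]
  ring

variable {f g : ℝ[X]} {s : Set ℝ}

theorem convexOn_eval_div_eval (hs : Convex ℝ s) (hg : ∀ r ∈ s, 0 < g.eval r)
    (hΔ : ∀ r ∈ interior s, 0 ≤ DeltaH f g r) :
    ConvexOn ℝ s (fun r => f.eval r / g.eval r) :=
  convexOn_of_hasDerivWithinAt2_nonneg hs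
    (f.continuousOn.div g.continuousOn fun r hr => (hg r hr).ne')
    (fun r hr => (hasDerivAt_eval_div_eval f g (hg r (interior_subset hr)).ne').hasDerivWithinAt)
    (fun r hr =>
      (hasDerivAt_eval_wronskian_div_sq f g (hg r (interior_subset hr)).ne').hasDerivWithinAt)
    (fun r hr => div_nonneg (hΔ r hr) (pow_pos (hg r (interior_subset hr)) 3).le)

theorem concaveOn_eval_div_eval (hs : Convex ℝ s) (hg : ∀ r ∈ s, 0 < g.eval r)
    (hΔ : ∀ r ∈ interior s, DeltaH f g r ≤ 0) :
    ConcaveOn ℝ s (fun r => f.eval r / g.eval r) :=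
  concaveOn_of_hasDerivWithinAt2_nonpos hs
    (f.continuousOn.div g.continuousOn fun r hr => (hg r hr).ne')
    (fun r hr => (hasDerivAt_eval_div_eval f g (hg r (interior_subset hr)).ne').hasDerivWithinAt)
    (fun r hr =>
      (hasDerivAt_eval_wronskian_div_sq f g (hg r (interior_subset hr)).ne').hasDerivWithinAt)
    (fun r hr =>
      div_nonpos_of_nonpos_of_nonneg (hΔ r hr) (pow_pos (hg r (interior_subset hr)) 3).le)

end Polynomial

theorem rational_convexity (f g : Polynomial ℝ) (a b : ℝ)
    (hg : ∀ r ∈ Set.Icc a b, 0 < g.eval r)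
    (hcond : ∀ r ∈ Set.Icc a b,
      (g.eval r) * ((g.eval r) * ((derivative (derivative (derivative f))).eval r)
          - (f.eval r) * ((derivative (derivative (derivative g))).eval r))
        - 3 * ((derivative (derivative g)).eval r)
          * ((g.eval r) * ((derivative f).eval r)
            - (f.eval r) * ((derivative g).eval r)) = 0) :
    (∀ r1 ∈ Set.Icc a b, ∀ r2 ∈ Set.Icc a b, DeltaH f g r1 = DeltaH f g r2) ∧
    (∀ r0 ∈ Set.Icc a b, 0 < DeltaH f g r0 →
      ConvexOn ℝ (Set.Icc a b) (fun r => f.eval r / g.eval r)) ∧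
    (∀ r0 ∈ Set.Icc a b, DeltaH f g r0 < 0 →
      ConcaveOn ℝ (Set.Icc a b) (fun r => f.eval r / g.eval r)) := by
  have hconst : ∀ r1 ∈ Icc a b, ∀ r2 ∈ Icc a b, DeltaH f g r1 = DeltaH f g r2 := by
    intro r1 h1 r2 h2
    simp only [← eval_deltaH]
    refine eval_eq_of_derivative_eval_eq_zero (convex_Icc a b) (fun r hr => ?_) h1 h2
    simpa [derivative_deltaH] using hcond r hr
  refine ⟨hconst, fun r0 hr0 hpos => ?_, fun r0 hr0 hneg => ?_⟩
  · exact convexOn_eval_div_eval (convex_Icc a b) hg fun r hr =>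
      (hconst r (interior_subset hr) r0 hr0).symm ▸ hpos.le
  · exact concaveOn_eval_div_eval (convex_Icc a b) hg fun r hr =>
      (hconst r (interior_subset hr) r0 hr0).symm ▸ hneg.le
end

section
/- Fix ρ > 0, B > 0, Ā ≥ 0 with Ā ≥ B, R̄ ≥ 0, and define J(u) = ( (Ā - B)/2·u² + (R̄ + Ā·ρ)·u + (ρ/2)·(2·R̄ + Ā·ρ) ) / (ρ + u) for u ≥ 0. Then J is monotonically nondecreasing on [0,∞); consequently the minimizer of J over any interval [0, ū] with ū ≥ 0 is u* = 0. -/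
/-! In the variable `v = ρ + u > 0` the cost is
`J = (Ā - B)/2 · v + (R̄ + B ρ) - (B ρ² / 2) / v`, an affine function of nonnegative slope
plus a negative multiple of `1 / v`; both are nondecreasing on `v > 0`. -/

open Set

theorem monotoneOn_mul_add_sub_div {a k : ℝ} (ha : 0 ≤ a) (hk : 0 ≤ k) (b : ℝ) :
    MonotoneOn (fun v => a * v + b - k / v) (Ioi 0) := by
  intro x hx y _ hxy
  have hlin : a * x ≤ a * y := mul_le_mul_of_nonneg_left hxy ha
  have hinv : k / y ≤ k / x := div_le_div_of_nonneg_left hk hx hxy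
  dsimp only
  linarith

theorem rhcp3_cost_eq (ρ B Abar Rbar u : ℝ) (hu : ρ + u ≠ 0) :
    ((Abar - B) / 2 * u ^ 2 + (Rbar + Abar * ρ) * u
        + (ρ / 2) * (2 * Rbar + Abar * ρ)) / (ρ + u)
      = (Abar - B) / 2 * (ρ + u) + (Rbar + B * ρ) - B * ρ ^ 2 / 2 / (ρ + u) := by
  field_simp
  ring

theorem rhcp3_case1_AgeB_general (ρ B Abar Rbar : ℝ)
    (hρ : 0 < ρ) (hB : 0 < B) (hAB : B ≤ Abar)
    (J : ℝ → ℝ)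
    (hJ : J = fun u =>
      ((Abar - B) / 2 * u ^ 2 + (Rbar + Abar * ρ) * u
        + (ρ / 2) * (2 * Rbar + Abar * ρ)) / (ρ + u)) :
    MonotoneOn J (Set.Ici 0) ∧
    ∀ ubar ≥ (0 : ℝ), ∀ u ∈ Set.Icc (0 : ℝ) ubar, J 0 ≤ J u := by
  have hshift : MapsTo (ρ + ·) (Ici 0) (Ioi 0) := fun u (hu : 0 ≤ u) =>
    show 0 < ρ + u by linarith
  have hmono : MonotoneOn J (Ici 0) := by
    refine ((monotoneOn_mul_add_sub_div (by linarith : 0 ≤ (Abar - B) / 2)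
      (by positivity : 0 ≤ B * ρ ^ 2 / 2) (Rbar + B * ρ)).comp
      (fun _ _ _ _ h => by gcongr) hshift).congr ?_
    intro u hu
    simp only [hJ, Function.comp_apply]
    exact (rhcp3_cost_eq ρ B Abar Rbar u (hshift hu).ne').symm
  exact ⟨hmono, fun _ _ u hu => hmono self_mem_Ici hu.1 hu.1⟩

theorem rhcp3_case1_AgeB (ρ B Abar Rbar : ℝ)
    (hρ : 0 < ρ) (hB : 0 < B) (hAbar : 0 ≤ Abar) (hAB : B ≤ Abar) (hRbar : 0 ≤ Rbar)
    (J : ℝ → ℝ)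
    (hJ : J = fun u =>
      ((Abar - B) / 2 * u ^ 2 + (Rbar + Abar * ρ) * u
        + (ρ / 2) * (2 * Rbar + Abar * ρ)) / (ρ + u)) :
    MonotoneOn J (Set.Ici 0) ∧
    ∀ ubar ≥ (0 : ℝ), ∀ u ∈ Set.Icc (0 : ℝ) ubar, J 0 ≤ J u :=
  rhcp3_case1_AgeB_general ρ B Abar Rbar hρ hB hAB J hJ
end

section
/- Fix ρ > 0, B > 0, 0 ≤ Ā < B, R̄ ≥ 0, and define J(u) = ( (Ā - B)/2·u² + (R̄ + Ā·ρ)·u + (ρ/2)·(2·R̄ + Ā·ρ) ) / (ρ + u) for u ≥ 0. Let u# = Ā·ρ/(B - Ā). Then J(u#) = J(0), and for all u > u#, J(u) < J(0); in particular, if ū ≥ u#, then the minimizer of J over [0, ū] is u* = ū, and if ū < u#, the minimizer is u* = 0. -/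
open Set

theorem rhcp3_case1_AltB (ρ B Abar Rbar usharp : ℝ)
    (hρ : 0 < ρ) (hB : 0 < B) (hAbar : 0 ≤ Abar) (hAB : Abar < B) (hRbar : 0 ≤ Rbar)
    (husharp : usharp = Abar * ρ / (B - Abar))
    (J : ℝ → ℝ)
    (hJ : J = fun u =>
      ((Abar - B) / 2 * u ^ 2 + (Rbar + Abar * ρ) * u
        + (ρ / 2) * (2 * Rbar + Abar * ρ)) / (ρ + u)) :
    J usharp = J 0 ∧
    (∀ u > usharp, J u < J 0) ∧
    (∀ ubar ≥ (0 : ℝ),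
      (usharp ≤ ubar → ∀ u ∈ Set.Icc (0 : ℝ) ubar, J ubar ≤ J u) ∧
      (ubar < usharp → ∀ u ∈ Set.Icc (0 : ℝ) ubar, J 0 ≤ J u)) := by
  have he : 0 < B - Abar := by linarith
  have hus0 : 0 ≤ usharp := by
    rw [husharp]; positivity
  have huse : (B - Abar) * usharp = Abar * ρ := by
    rw [husharp]; field_simp
  have hdiff : ∀ u : ℝ, 0 ≤ u →
      J u - J 0 = u * (Abar * ρ - (B - Abar) * u) / (2 * (ρ + u)) := by
    intro u hu
    have h1 : (0:ℝ) < ρ + u := by linarith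
    subst hJ
    simp only
    field_simp
    ring
  refine ⟨?_, ?_, ?_⟩
  · have := hdiff usharp hus0
    have hz : Abar * ρ - (B - Abar) * usharp = 0 := by linarith
    rw [hz] at this
    simp at this
    linarith
  · intro u hu
    have hu0 : 0 ≤ u := le_trans hus0 hu.le
    have := hdiff u hu0
    have hden : (0:ℝ) < 2 * (ρ + u) := by linarith
    have hnum : u * (Abar * ρ - (B - Abar) * u) < 0 := by
      have h1 : Abar * ρ - (B - Abar) * u < 0 := by nlinarith
      have h2 : 0 < u := lt_of_le_of_lt hus0 hu
      nlinarith
    have : J u - J 0 < 0 := by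
      rw [this]; exact div_neg_of_neg_of_pos hnum hden
    linarith
  · intro ubar hubar
    constructor
    · intro hle u hu
      obtain ⟨hu0, huub⟩ := hu
      have d1 := hdiff u hu0
      have d2 := hdiff ubar hubar
      have hp1 : (0:ℝ) < 2 * (ρ + u) := by linarith
      have hp2 : (0:ℝ) < 2 * (ρ + ubar) := by linarith
      -- suffices: diff ubar ≤ diff u
      have key : ubar * (Abar * ρ - (B - Abar) * ubar) / (2 * (ρ + ubar))
          ≤ u * (Abar * ρ - (B - Abar) * u) / (2 * (ρ + u)) := by
        rw [div_le_div_iff₀ hp2 hp1]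
        have h1 : Abar * ρ ≤ (B - Abar) * ubar := by nlinarith
        have hbr : 0 ≤ (B - Abar) * ρ * (u + ubar) + (B - Abar) * u * ubar
            - Abar * ρ * ρ := by
          nlinarith [mul_nonneg (sub_nonneg.mpr h1) hρ.le,
            mul_nonneg (mul_nonneg he.le hρ.le) hu0,
            mul_nonneg (mul_nonneg he.le hu0) hubar]
        nlinarith [mul_nonneg (sub_nonneg.mpr huub) hbr]
      linarith
    · intro hlt u hu
      obtain ⟨hu0, huub⟩ := hu
      have d1 := hdiff u hu0
      have hp1 : (0:ℝ) < 2 * (ρ + u) := by linarith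
      have h1 : 0 ≤ Abar * ρ - (B - Abar) * u := by nlinarith
      have : 0 ≤ u * (Abar * ρ - (B - Abar) * u) / (2 * (ρ + u)) :=
        div_nonneg (mul_nonneg hu0 h1) hp1.le
      linarith
end

section
/- Fix ρ > 0, 0 ≤ A < B, R ≥ 0, Ā_j ≥ 0 (with Ā = Ā_j + A, where we also use coefficients C2 = Ā_j/2, C5 = R̄_j + Ā_j·ρ ≥ 0). Let uB = (R + A·ρ)/(B - A) and consider J(v) = J_H(uB, v) given by equation (17) of the paper. Then the second derivative of J with respect to v satisfies J''(v) = (R² + 2·B·ρ·R + A·B·ρ²) / ((B - A)·(ρ + uB + v)³) > 0 for all v ≥ 0 whenever R > 0 or A·B·ρ > 0; hence J is strictly convex on [0,∞). -/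
/-!
Writing `c = ρ + uB`, the cost is a quadratic `p` in `v` divided by `v + c`, and
`p / (v + c) = α v + (β - α c) + p(-c) / (v + c)` for `p = α v² + β v + γ`. The affine part
does not contribute to the second derivative, which is therefore `2 p(-c) / (v + c)³`.
Substituting `uB`, `Ā` and `R̄` gives `2 (B - A) p(-c) = R² + 2BρR + ABρ²`, which is positive
as soon as `R > 0` or `ABρ > 0`.
-/

open Filter Topology

section QuadraticDivLinear

variable (α β γ c : ℝ) {v : ℝ}

theorem deriv_quadratic_div_linear (hv : v + c ≠ 0) :
    deriv (fun w => (α * w ^ 2 + β * w + γ) / (w + c)) v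
      = α - (α * c ^ 2 - β * c + γ) / (v + c) ^ 2 := by
  have hnum : HasDerivAt (fun w => α * w ^ 2 + β * w + γ) (α * (2 * v) + β) v := by
    simpa using (((hasDerivAt_pow 2 v).const_mul α).add
      ((hasDerivAt_id' v).const_mul β)).add_const γ
  refine ((hnum.div ((hasDerivAt_id' v).add_const c) hv).congr_deriv ?_).deriv
  field_simp
  ring

theorem deriv_deriv_quadratic_div_linear (hv : v + c ≠ 0) :
    deriv (deriv fun w => (α * w ^ 2 + β * w + γ) / (w + c)) v
      = 2 * (α * c ^ 2 - β * c + γ) / (v + c) ^ 3 := by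
  set K := α * c ^ 2 - β * c + γ
  have hpole : {w : ℝ | w + c ≠ 0} ∈ 𝓝 v :=
    (isOpen_compl_singleton.preimage (by fun_prop)).mem_nhds hv
  have hderiv : deriv (fun w => (α * w ^ 2 + β * w + γ) / (w + c))
      =ᶠ[𝓝 v] fun w => α - K / (w + c) ^ 2 := by
    filter_upwards [hpole] with w hw
    exact deriv_quadratic_div_linear α β γ c hw
  have hsq : HasDerivAt (fun w => (w + c) ^ 2) (2 * (v + c)) v := by
    simpa using ((hasDerivAt_id' v).add_const c).fun_pow 2
  rw [hderiv.deriv_eq]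
  refine ((((hsq.inv (pow_ne_zero 2 hv)).const_mul K).const_sub α).congr_deriv ?_).deriv
  field_simp

end QuadraticDivLinear

theorem sq_add_two_mul_add_mul_sq_pos {A B R ρ : ℝ} (hρ : 0 < ρ) (hA : 0 ≤ A) (hB : 0 < B)
    (hR : 0 ≤ R) (h : 0 < R ∨ 0 < A * B * ρ) :
    0 < R ^ 2 + 2 * B * ρ * R + A * B * ρ ^ 2 := by
  have hmid : 0 ≤ 2 * B * ρ * R := by positivity
  rcases h with hR' | hABρ
  · have : 0 ≤ A * B * ρ ^ 2 := by positivity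
    nlinarith
  · nlinarith [mul_pos hABρ hρ, sq_nonneg R]

open Set

theorem rhcp3_case2_convexity_general (ρ A B R Aj Rj Abar Rbar uB : ℝ)
    (hρ : 0 < ρ) (hA : 0 ≤ A) (hAB : A < B) (hR : 0 ≤ R)
    (hAbar : Abar = Aj + A) (hRbar : Rbar = Rj + R)
    (huB : uB = (R + A * ρ) / (B - A))
    (J : ℝ → ℝ)
    (hJ : J = fun v =>
      ((Abar - B) / 2 * uB ^ 2 + (Aj / 2) * v ^ 2 + Aj * uB * v
        + (Rbar + Abar * ρ) * uB + (Rj + Aj * ρ) * v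
        + (ρ / 2) * (2 * Rbar + Abar * ρ)) / (ρ + uB + v)) :
    (∀ v ≥ (0 : ℝ),
      deriv (deriv J) v
        = (R ^ 2 + 2 * B * ρ * R + A * B * ρ ^ 2) / ((B - A) * (ρ + uB + v) ^ 3) ∧
      ((0 < R ∨ 0 < A * B * ρ) → 0 < deriv (deriv J) v)) ∧
    ((0 < R ∨ 0 < A * B * ρ) → StrictConvexOn ℝ (Set.Ici 0) J) := by
  have hBA : 0 < B - A := sub_pos.2 hAB
  have huB0 : 0 ≤ uB := huB ▸ div_nonneg (by positivity) hBA.le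
  set γ := (Abar - B) / 2 * uB ^ 2 + (Rbar + Abar * ρ) * uB + ρ / 2 * (2 * Rbar + Abar * ρ)
  have hJ' : J = fun v => (Aj / 2 * v ^ 2 + (Aj * uB + Rj + Aj * ρ) * v + γ) / (v + (ρ + uB)) := by
    rw [hJ]; funext v; congr 1 <;> ring
  have hpole : 2 * (B - A) * (Aj / 2 * (ρ + uB) ^ 2 - (Aj * uB + Rj + Aj * ρ) * (ρ + uB) + γ)
      = R ^ 2 + 2 * B * ρ * R + A * B * ρ ^ 2 := by
    simp only [γ, hAbar, hRbar, huB]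
    field_simp
    ring
  have hderiv2 : ∀ v ≥ (0 : ℝ), deriv (deriv J) v
      = (R ^ 2 + 2 * B * ρ * R + A * B * ρ ^ 2) / ((B - A) * (ρ + uB + v) ^ 3) := by
    intro v hv
    rw [hJ', deriv_deriv_quadratic_div_linear _ _ _ _ (by positivity), ← hpole]
    field_simp
    ring
  have hpos : (0 < R ∨ 0 < A * B * ρ) → ∀ v ≥ (0 : ℝ), 0 < deriv (deriv J) v := by
    intro h v hv
    rw [hderiv2 v hv]
    exact div_pos (sq_add_two_mul_add_mul_sq_pos hρ hA (hA.trans_lt hAB) hR h) (by positivity)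
  refine ⟨fun v hv => ⟨hderiv2 v hv, fun h => hpos h v hv⟩, fun h => ?_⟩
  refine strictConvexOn_of_deriv2_pos (convex_Ici 0) ?_ fun x hx => hpos h x ?_
  · rw [hJ]
    exact ContinuousOn.div (by fun_prop) (by fun_prop) fun x (hx : 0 ≤ x) => by positivity
  · rw [interior_Ici] at hx
    exact hx.le

theorem rhcp3_case2_convexity (ρ A B R Aj Rj Abar Rbar uB : ℝ)
    (hρ : 0 < ρ) (hA : 0 ≤ A) (hAB : A < B) (hR : 0 ≤ R)
    (hAj : 0 ≤ Aj) (hRj : 0 ≤ Rj)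
    (hAbar : Abar = Aj + A) (hRbar : Rbar = Rj + R)
    (huB : uB = (R + A * ρ) / (B - A))
    (J : ℝ → ℝ)
    (hJ : J = fun v =>
      ((Abar - B) / 2 * uB ^ 2 + (Aj / 2) * v ^ 2 + Aj * uB * v
        + (Rbar + Abar * ρ) * uB + (Rj + Aj * ρ) * v
        + (ρ / 2) * (2 * Rbar + Abar * ρ)) / (ρ + uB + v)) :
    (∀ v ≥ (0 : ℝ),
      deriv (deriv J) v
        = (R ^ 2 + 2 * B * ρ * R + A * B * ρ ^ 2) / ((B - A) * (ρ + uB + v) ^ 3) ∧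
      ((0 < R ∨ 0 < A * B * ρ) → 0 < deriv (deriv J) v)) ∧
    ((0 < R ∨ 0 < A * B * ρ) → StrictConvexOn ℝ (Set.Ici 0) J) :=
  rhcp3_case2_convexity_general ρ A B R Aj Rj Abar Rbar uB hρ hA hAB hR hAbar hRbar huB J hJ
end
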